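/- Let (L, ∘_λ, [·_λ ·]) be a transposed Poisson conformal superalgebra. Then for all homogeneous u, v, x, y ∈ L the following identity holds: (−1)^{|v||x|} [(u ∘_λ x)_μ (v ∘_γ y)] + (−1)^{|u|(|x|+|v|)} [(v ∘_γ x)_{γ+μ−λ} (u ∘_λ y)] = 2 (u ∘_λ v) ∘_{λ+γ} [x_{μ−λ} y]. -/

import Mathlib

open Polynomial
open scoped TensorProduct

noncomputable section

namespace TPCSAFormal

/-- The super-sign `(-1)^{i·j}` for parities `i, j ∈ ℤ/2ℤ`. -/
def sgn (i j : ZMod 2) : ℂ := (-1 : ℂ) ^ (i.val * j.val)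

variable (L : Type*) [AddCommGroup L] [Module ℂ L]
  [Module (Polynomial ℂ) L] [IsScalarTower ℂ (Polynomial ℂ) L]

/-- A conformal `λ`-product on the `ℂ[∂]`-module `L`, recorded by its family of `n`-th
product coefficients: `a ∘_λ b = ∑_n λ^n • coeff n a b`, with finitely many nonzero terms.
This is exactly the data of a `ℂ`-bilinear map `L ⊗ L → ℂ[λ] ⊗ L`. -/
structure ConformalProduct where
  coeff : ℕ → L →ₗ[ℂ] L →ₗ[ℂ] L
  coeff_finite : ∀ a b : L, ∃ N : ℕ, ∀ n : ℕ, N ≤ n → coeff n a b = 0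

variable {L}

/-- The value `a ∘_λ b` of the `λ`-product at `λ ∈ ℂ`.  Since `ℂ` is infinite, identities
between such values for all `λ` are equivalent to the corresponding polynomial identities. -/
def ConformalProduct.mul (m : ConformalProduct L) (lam : ℂ) (a b : L) : L :=
  ∑ᶠ n : ℕ, lam ^ n • m.coeff n a b

/-- The value `a ∘_{-∂-λ} b`, where `∂` acts on `L` as scalar multiplication by
`X ∈ ℂ[∂]` (the variable `λ` being replaced by the operator `-∂-λ`). -/
def ConformalProduct.cmul (m : ConformalProduct L) (lam : ℂ) (a b : L) : L :=
  ∑ᶠ n : ℕ, ((-((X : Polynomial ℂ) + C lam)) ^ n) • m.coeff n a b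

variable (L) in
/-- A `ℤ₂`-grading on `L` making it a `ℤ₂`-graded `ℂ[∂]`-module: `L = L₀ ⊕ L₁` with
`∂ L_i ⊆ L_i`, where `∂` acts as multiplication by `X ∈ ℂ[∂]`. -/
structure SuperModule where
  grade : ZMod 2 → Submodule ℂ L
  isInternal : DirectSum.IsInternal grade
  X_smul_mem : ∀ (i : ZMod 2) (a : L), a ∈ grade i → (X : Polynomial ℂ) • a ∈ grade i

/-- `m` is an even `λ`-product on the `ℤ₂`-graded `ℂ[∂]`-module `(L, S)`:
it is even with respect to the grading and conformally sesquilinear. -/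
structure IsLambdaProduct (S : SuperModule L) (m : ConformalProduct L) : Prop where
  even : ∀ (i j : ZMod 2) (a b : L), a ∈ S.grade i → b ∈ S.grade j →
    ∀ n : ℕ, m.coeff n a b ∈ S.grade (i + j)
  sesq_left : ∀ (lam : ℂ) (a b : L),
    m.mul lam ((X : Polynomial ℂ) • a) b = (-lam) • m.mul lam a b
  sesq_right : ∀ (lam : ℂ) (a b : L),
    m.mul lam a ((X : Polynomial ℂ) • b) =
      (X : Polynomial ℂ) • m.mul lam a b + lam • m.mul lam a b

/-- `(L, S, m)` is a commutative associative conformal superalgebra. -/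
structure IsCommAssoc (S : SuperModule L) (m : ConformalProduct L)
    extends IsLambdaProduct S m : Prop where
  comm : ∀ (i j : ZMod 2) (a b : L), a ∈ S.grade i → b ∈ S.grade j →
    ∀ lam : ℂ, m.mul lam a b = sgn i j • m.cmul lam b a
  assoc : ∀ (lam mu : ℂ) (a b c : L),
    m.mul lam a (m.mul mu b c) = m.mul (lam + mu) (m.mul lam a b) c

/-- `(L, S, br)` is a Lie conformal superalgebra. -/
structure IsLie (S : SuperModule L) (br : ConformalProduct L)
    extends IsLambdaProduct S br : Prop where
  skew : ∀ (i j : ZMod 2) (a b : L), a ∈ S.grade i → b ∈ S.grade j →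
    ∀ lam : ℂ, br.mul lam a b = -(sgn i j • br.cmul lam b a)
  jacobi : ∀ (i j : ZMod 2) (a b : L), a ∈ S.grade i → b ∈ S.grade j →
    ∀ (c : L) (lam mu : ℂ),
      br.mul lam a (br.mul mu b c) =
        br.mul (lam + mu) (br.mul lam a b) c + sgn i j • br.mul mu b (br.mul lam a c)

/-- `(L, S, m, br)` is a transposed Poisson conformal superalgebra. -/
structure IsTPCSA (S : SuperModule L) (m br : ConformalProduct L) : Prop where
  commAssoc : IsCommAssoc S m
  lie : IsLie S br
  transposedLeibniz : ∀ (i j : ZMod 2) (a b : L), a ∈ S.grade i → b ∈ S.grade j →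
    ∀ (c : L) (lam mu : ℂ),
      (2 : ℂ) • m.mul lam a (br.mul mu b c) =
        br.mul (lam + mu) (m.mul lam a b) c + sgn i j • br.mul mu b (m.mul lam a c)

/-- `(L, S, m, br)` is a Poisson conformal superalgebra. -/
structure IsPCSA (S : SuperModule L) (m br : ConformalProduct L) : Prop where
  commAssoc : IsCommAssoc S m
  lie : IsLie S br
  leibniz : ∀ (i j : ZMod 2) (a b : L), a ∈ S.grade i → b ∈ S.grade j →
    ∀ (c : L) (lam mu : ℂ),
      br.mul lam a (m.mul mu b c) =
        m.mul (lam + mu) (br.mul lam a b) c + sgn i j • m.mul mu b (br.mul lam a c)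

/-- `(L, S, br, α)` is a Hom-Lie conformal superalgebra. -/
structure IsHomLie (S : SuperModule L) (br : ConformalProduct L) (α : L → L)
    extends IsLambdaProduct S br : Prop where
  map_smul_add : ∀ (c : ℂ) (a b : L), α (c • a + b) = c • α a + α b
  map_grade : ∀ (i : ZMod 2) (a : L), a ∈ S.grade i → α a ∈ S.grade i
  commute_partial : ∀ a : L, α ((X : Polynomial ℂ) • a) = (X : Polynomial ℂ) • α a
  skew : ∀ (i j : ZMod 2) (a b : L), a ∈ S.grade i → b ∈ S.grade j →
    ∀ lam : ℂ, br.mul lam a b = -(sgn i j • br.cmul lam b a)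
  homJacobi : ∀ (i j : ZMod 2) (a b : L), a ∈ S.grade i → b ∈ S.grade j →
    ∀ (c : L) (lam mu : ℂ),
      br.mul lam (α a) (br.mul mu b c) =
        br.mul (lam + mu) (br.mul lam a b) (α c) + sgn i j • br.mul mu (α b) (br.mul lam a c)

/-- `(L, S, p)` is a left-symmetric conformal superalgebra. -/
structure IsLeftSymmetric (S : SuperModule L) (p : ConformalProduct L)
    extends IsLambdaProduct S p : Prop where
  leftSym : ∀ (i j : ZMod 2) (a b : L), a ∈ S.grade i → b ∈ S.grade j →
    ∀ (c : L) (lam mu : ℂ),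
      p.mul (lam + mu) (p.mul lam a b) c - p.mul lam a (p.mul mu b c) =
        sgn i j • (p.mul (lam + mu) (p.mul mu b a) c - p.mul mu b (p.mul lam a c))

/-- `(L, S, p)` is a (left) Novikov conformal superalgebra. -/
structure IsNovikov (S : SuperModule L) (p : ConformalProduct L)
    extends IsLeftSymmetric S p : Prop where
  novikov : ∀ (j k : ZMod 2) (b c : L), b ∈ S.grade j → c ∈ S.grade k →
    ∀ (a : L) (lam mu : ℂ),
      p.mul (lam + mu) (p.mul lam a b) c = sgn j k • p.cmul mu (p.mul lam a c) b

/-- `(L, S, mc, p)` is a Novikov-Poisson conformal superalgebra. -/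
structure IsNovikovPoisson (S : SuperModule L) (mc p : ConformalProduct L) : Prop where
  commAssoc : IsCommAssoc S mc
  novikov : IsNovikov S p
  compat₁ : ∀ (lam mu : ℂ) (a b c : L),
    p.mul (lam + mu) (mc.mul lam a b) c = mc.mul lam a (p.mul mu b c)
  compat₂ : ∀ (i j : ZMod 2) (a b : L), a ∈ S.grade i → b ∈ S.grade j →
    ∀ (c : L) (lam mu : ℂ),
      mc.mul (lam + mu) (p.mul lam a b) c - p.mul lam a (mc.mul mu b c) =
        sgn i j • (mc.mul (lam + mu) (p.mul mu b a) c - p.mul mu b (mc.mul lam a c))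

/-- `(L, S, mc, p)` is a pre-Lie commutative conformal superalgebra. -/
structure IsPreLieComm (S : SuperModule L) (mc p : ConformalProduct L) : Prop where
  commAssoc : IsCommAssoc S mc
  leftSymmetric : IsLeftSymmetric S p
  compat : ∀ (i j : ZMod 2) (a b : L), a ∈ S.grade i → b ∈ S.grade j →
    ∀ (c : L) (lam mu : ℂ),
      p.mul lam a (mc.mul mu b c) =
        mc.mul (lam + mu) (p.mul lam a b) c + sgn i j • mc.mul mu b (p.mul lam a c)

/-- `(L, S, mc, p)` is a pre-Lie Poisson conformal superalgebra. -/
structure IsPreLiePoisson (S : SuperModule L) (mc p : ConformalProduct L) : Prop where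
  commAssoc : IsCommAssoc S mc
  leftSymmetric : IsLeftSymmetric S p
  compat₁ : ∀ (lam mu : ℂ) (a b c : L),
    p.mul (lam + mu) (mc.mul lam a b) c = mc.mul lam a (p.mul mu b c)
  compat₂ : ∀ (i j : ZMod 2) (a b : L), a ∈ S.grade i → b ∈ S.grade j →
    ∀ (c : L) (lam mu : ℂ),
      mc.mul (lam + mu) (p.mul lam a b) c - p.mul lam a (mc.mul mu b c) =
        sgn i j • (mc.mul (lam + mu) (p.mul mu b a) c - p.mul mu b (mc.mul lam a c))


/-!
With `ν = μ - λ`, expand `2 • 2 • u ∘_λ (v ∘_γ [x_ν y])` by the transposed Leibniz rule in two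
ways: once with `u ∘_λ v` as a single element (one application), and once by moving `v ∘_γ` and
then `u ∘_λ` inside the bracket (two applications). Associativity identifies the terms the two
expansions share, and what remains is the identity.
-/

lemma sgn_add_left (i j k : ZMod 2) : sgn (i + j) k = sgn i k * sgn j k := by
  unfold sgn
  rw [← pow_add, ← add_mul, neg_one_pow_eq_pow_mod_two, Nat.mul_mod, ZMod.val_add, Nat.mod_mod,
    ← Nat.mul_mod, ← neg_one_pow_eq_pow_mod_two]

namespace ConformalProduct

omit [Module ℂ[X] L] [IsScalarTower ℂ ℂ[X] L] in
lemma hasFiniteSupport_coeff (m : ConformalProduct L) (lam : ℂ) (a b : L) :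
    Function.HasFiniteSupport fun n => lam ^ n • m.coeff n a b := by
  obtain ⟨N, hN⟩ := m.coeff_finite a b
  refine (Set.finite_Iio N).subset fun n hn => ?_
  by_contra hlt
  exact hn (by simp [hN n (not_lt.mp hlt)])

omit [Module ℂ[X] L] [IsScalarTower ℂ ℂ[X] L] in
lemma mul_add_right (m : ConformalProduct L) (lam : ℂ) (a b c : L) :
    m.mul lam a (b + c) = m.mul lam a b + m.mul lam a c := by
  simp only [mul, map_add, smul_add]
  exact finsum_add_distrib (m.hasFiniteSupport_coeff lam a b) (m.hasFiniteSupport_coeff lam a c)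

omit [Module ℂ[X] L] [IsScalarTower ℂ ℂ[X] L] in
lemma mul_smul_right (m : ConformalProduct L) (lam r : ℂ) (a b : L) :
    m.mul lam a (r • b) = r • m.mul lam a b := by
  simp only [mul, map_smul, smul_finsum, smul_comm r]

end ConformalProduct

omit [IsScalarTower ℂ ℂ[X] L] in
lemma IsLambdaProduct.mul_mem {S : SuperModule L} {m : ConformalProduct L}
    (hm : IsLambdaProduct S m) {i j : ZMod 2} {a b : L}
    (ha : a ∈ S.grade i) (hb : b ∈ S.grade j) (lam : ℂ) :
    m.mul lam a b ∈ S.grade (i + j) :=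
  finsum_induction (· ∈ S.grade (i + j)) (zero_mem _) (fun _ _ => add_mem)
    fun n => Submodule.smul_mem _ _ (hm.even i j a b ha hb n)

omit [IsScalarTower ℂ ℂ[X] L] in
lemma IsTPCSA.two_smul_two_smul_mul_mul_bracket {S : SuperModule L} {m br : ConformalProduct L}
    (hT : IsTPCSA S m br) {iu iv ix : ZMod 2} {u v x : L}
    (hu : u ∈ S.grade iu) (hv : v ∈ S.grade iv) (hx : x ∈ S.grade ix) (y : L) (lam gam nu : ℂ) :
    (2 : ℂ) • (2 : ℂ) • m.mul lam u (m.mul gam v (br.mul nu x y)) =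
      br.mul (lam + gam + nu) (m.mul (lam + gam) (m.mul lam u v) x) y
        + sgn iu (iv + ix) • br.mul (gam + nu) (m.mul gam v x) (m.mul lam u y)
        + sgn iv ix • br.mul (lam + nu) (m.mul lam u x) (m.mul gam v y)
        + sgn (iu + iv) ix • br.mul nu x (m.mul (lam + gam) (m.mul lam u v) y) := by
  have hvx := hT.commAssoc.mul_mem hv hx gam
  have hv_leibniz := congrArg (m.mul lam u) (hT.transposedLeibniz iv ix v x hv hx y gam nu)
  simp only [m.mul_smul_right, m.mul_add_right] at hv_leibniz
  have hu_leibniz₁ := hT.transposedLeibniz iu (iv + ix) u _ hu hvx y lam (gam + nu)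
  have hu_leibniz₂ := hT.transposedLeibniz iu ix u x hu hx (m.mul gam v y) lam nu
  rw [← add_assoc, hT.commAssoc.assoc] at hu_leibniz₁
  rw [hT.commAssoc.assoc] at hu_leibniz₂
  rw [sgn_add_left]
  linear_combination (norm := module) (2 : ℂ) • hv_leibniz + hu_leibniz₁ + sgn iv ix • hu_leibniz₂

theorem statement_5_general (S : SuperModule L) (m br : ConformalProduct L)
    (hT : IsTPCSA S m br) (iu iv ix : ZMod 2) (u v x y : L)
    (hu : u ∈ S.grade iu) (hv : v ∈ S.grade iv) (hx : x ∈ S.grade ix)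
    (lam mu gam : ℂ) :
    sgn iv ix • br.mul mu (m.mul lam u x) (m.mul gam v y)
      + sgn iu (ix + iv) • br.mul (gam + mu - lam) (m.mul gam v x) (m.mul lam u y)
      = (2 : ℂ) • m.mul (lam + gam) (m.mul lam u v) (br.mul (mu - lam) x y) := by
  have hexpand := hT.two_smul_two_smul_mul_mul_bracket hu hv hx y lam gam (mu - lam)
  have huv_leibniz := hT.transposedLeibniz (iu + iv) ix _ x
    (hT.commAssoc.mul_mem hu hv lam) hx y (lam + gam) (mu - lam)
  rw [hT.commAssoc.assoc, show lam + (mu - lam) = mu by ring,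
    show gam + (mu - lam) = gam + mu - lam by ring, add_comm iv ix] at hexpand
  linear_combination (norm := module) huv_leibniz - hexpand

/-- the identity (3.19) in a transposed Poisson conformal superalgebra. -/
theorem statement_5 (S : SuperModule L) (m br : ConformalProduct L)
    (hT : IsTPCSA S m br) (iu iv ix iy : ZMod 2) (u v x y : L)
    (hu : u ∈ S.grade iu) (hv : v ∈ S.grade iv) (hx : x ∈ S.grade ix) (hy : y ∈ S.grade iy)
    (lam mu gam : ℂ) :
    sgn iv ix • br.mul mu (m.mul lam u x) (m.mul gam v y)
      + sgn iu (ix + iv) • br.mul (gam + mu - lam) (m.mul gam v x) (m.mul lam u y)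
      = (2 : ℂ) • m.mul (lam + gam) (m.mul lam u v) (br.mul (mu - lam) x y) :=
  statement_5_general S m br hT iu iv ix u v x y hu hv hx lam mu gam

end TPCSAFormal
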